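/- For m ≥ 2, 1 ≤ i ≤ m−1, and p ∈ (0,1): the conditional entropy of the symmetric group test output y given the participation vector of m−i of the defectives equals (1−p)^{m−i} h((1−p)^i) + p^{m−i} h(p^i), where h is the binary entropy function. -/
import Mathlib


/-- Probability of the outcome x of k i.i.d. Bernoulli(p) indicators. -/
noncomputable def binProd (k : ℕ) (p : ℝ) (x : Fin k → Fin 2) : ℝ :=
  ∏ a, if x a = 1 then p else 1 - p

/-- Symmetric group test outcome on the combined indicators (x, w):
1 if all are 1, 0 if all are 0, else 2. -/
def sgtOut2 {i j : ℕ} (x : Fin i → Fin 2) (w : Fin j → Fin 2) : Fin 3 :=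
  if (∀ a, x a = 1) ∧ (∀ b, w b = 1) then 1
  else if (∀ a, x a = 0) ∧ (∀ b, w b = 0) then 0 else 2

/-- P(y = c | X_{D₂} = w), with X_{D₁} consisting of i i.i.d. Bernoulli(p) indicators. -/
noncomputable def condProb (i j : ℕ) (p : ℝ) (w : Fin j → Fin 2) (c : Fin 3) : ℝ :=
  ∑ x : Fin i → Fin 2, if sgtOut2 x w = c then binProd i p x else 0

/-- Conditional entropy H(y | X_{D₂}) in bits (Real.logb 2 0 = 0 gives 0·log 0 = 0). -/
noncomputable def condEnt (i j : ℕ) (p : ℝ) : ℝ :=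
  ∑ w : Fin j → Fin 2, binProd j p w *
    (-∑ c : Fin 3, condProb i j p w c * Real.logb 2 (condProb i j p w c))

/-- Binary entropy function. -/
noncomputable def hbin (ζ : ℝ) : ℝ :=
  -(ζ * Real.logb 2 ζ) - (1 - ζ) * Real.logb 2 (1 - ζ)

lemma sum_binProd (k : ℕ) (p : ℝ) : ∑ x : Fin k → Fin 2, binProd k p x = 1 := by
  classical
  unfold binProd
  have h := Finset.sum_prod_piFinset (ι := Fin k) (Finset.univ : Finset (Fin 2))
    (fun _ b => if b = 1 then p else 1 - p)
  rw [Fintype.piFinset_univ] at h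
  rw [h]
  have : (∑ b : Fin 2, if b = 1 then p else 1 - p) = 1 := by
    rw [Fin.sum_univ_two]; norm_num
  simp [this]

lemma sum_ite_all (k : ℕ) (p : ℝ) (c : Fin 2) :
    (∑ x : Fin k → Fin 2, if (∀ a, x a = c) then binProd k p x else 0)
      = binProd k p (fun _ => c) := by
  classical
  have h : ∀ x : Fin k → Fin 2, (∀ a, x a = c) ↔ x = fun _ => c := by
    intro x; constructor
    · intro hx; funext a; exact hx a
    · intro hx a; rw [hx]
  simp_rw [h]
  simp [Finset.sum_ite_eq']

lemma binProd_const_one (k : ℕ) (p : ℝ) : binProd k p (fun _ => 1) = p ^ k := by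
  unfold binProd; simp

lemma binProd_const_zero (k : ℕ) (p : ℝ) : binProd k p (fun _ => 0) = (1 - p) ^ k := by
  unfold binProd
  simp [show ((0 : Fin 2) = 1) ↔ False by decide]

/-- With m = i + j defectives, 1 ≤ i ≤ m − 1 (i.e. i, j ≥ 1), the conditional entropy
of the symmetric group test output given the participation indicators of the m − i = j
defectives in D₂ equals (1−p)^(m−i) h((1−p)^i) + p^(m−i) h(p^i). -/
theorem sgt_conditional_entropy (i j : ℕ) (hi : 1 ≤ i) (hj : 1 ≤ j)
    (p : ℝ) (hp0 : 0 < p) (hp1 : p < 1) :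
    condEnt i j p = (1 - p) ^ j * hbin ((1 - p) ^ i) + p ^ j * hbin (p ^ i) := by
  classical
  set c0 : Fin j → Fin 2 := fun _ => 0 with hc0
  set c1 : Fin j → Fin 2 := fun _ => 1 with hc1
  have hb : Fin j := ⟨0, hj⟩
  have hne : c0 ≠ c1 := by
    intro h
    have := congrFun h hb
    simp [c0, c1] at this
  have key : ∀ w : Fin j → Fin 2,
      binProd j p w * (-∑ c : Fin 3, condProb i j p w c * Real.logb 2 (condProb i j p w c))
      = (if w = c0 then (1 - p) ^ j * hbin ((1 - p) ^ i) else 0)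
        + (if w = c1 then p ^ j * hbin (p ^ i) else 0) := by
    intro w
    by_cases h0 : w = c0
    · subst h0
      rw [if_pos rfl, if_neg hne, add_zero]
      have hout : ∀ x : Fin i → Fin 2, sgtOut2 x c0 = if (∀ a, x a = 0) then 0 else 2 := by
        intro x
        unfold sgtOut2
        have hw1 : ¬ (∀ b : Fin j, c0 b = 1) := by
          intro h; have := h hb; simp [c0] at this
        rw [if_neg (by tauto)]
        by_cases hx : ∀ a, x a = 0
        · rw [if_pos ⟨hx, fun b => rfl⟩, if_pos hx]
        · rw [if_neg (by tauto), if_neg hx]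
      have cp0 : condProb i j p c0 0 = (1 - p) ^ i := by
        unfold condProb
        simp_rw [hout]
        have : ∀ x : Fin i → Fin 2,
            (if (if (∀ a, x a = 0) then (0 : Fin 3) else 2) = 0 then binProd i p x else 0)
            = if (∀ a, x a = 0) then binProd i p x else 0 := by
          intro x; split_ifs with h <;> simp_all
        simp_rw [this]
        rw [sum_ite_all, binProd_const_zero]
      have cp1 : condProb i j p c0 1 = 0 := by
        unfold condProb
        simp_rw [hout]
        refine Finset.sum_eq_zero fun x _ => ?_
        split_ifs with h <;> simp_all
      have cp2 : condProb i j p c0 2 = 1 - (1 - p) ^ i := by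
        unfold condProb
        simp_rw [hout]
        have : ∀ x : Fin i → Fin 2,
            (if (if (∀ a, x a = 0) then (0 : Fin 3) else 2) = 2 then binProd i p x else 0)
            = binProd i p x - (if (∀ a, x a = 0) then binProd i p x else 0) := by
          intro x; split_ifs with h <;> simp_all
        simp_rw [this]
        rw [Finset.sum_sub_distrib, sum_binProd, sum_ite_all, binProd_const_zero]
      rw [Fin.sum_univ_three, cp0, cp1, cp2, binProd_const_zero]
      unfold hbin
      ring
    · by_cases h1 : w = c1
      · subst h1
        rw [if_neg h0, if_pos rfl, zero_add]
        have hout : ∀ x : Fin i → Fin 2, sgtOut2 x c1 = if (∀ a, x a = 1) then 1 else 2 := by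
          intro x
          unfold sgtOut2
          have hw0 : ¬ (∀ b : Fin j, c1 b = 0) := by
            intro h; have := h hb; simp [c1] at this
          by_cases hx : ∀ a, x a = 1
          · rw [if_pos ⟨hx, fun b => rfl⟩, if_pos hx]
          · rw [if_neg (by tauto), if_neg (by tauto), if_neg hx]
        have cp0 : condProb i j p c1 0 = 0 := by
          unfold condProb
          simp_rw [hout]
          refine Finset.sum_eq_zero fun x _ => ?_
          split_ifs with h <;> simp_all
        have cp1 : condProb i j p c1 1 = p ^ i := by
          unfold condProb
          simp_rw [hout]
          have : ∀ x : Fin i → Fin 2,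
              (if (if (∀ a, x a = 1) then (1 : Fin 3) else 2) = 1 then binProd i p x else 0)
              = if (∀ a, x a = 1) then binProd i p x else 0 := by
            intro x; split_ifs with h <;> simp_all
          simp_rw [this]
          rw [sum_ite_all, binProd_const_one]
        have cp2 : condProb i j p c1 2 = 1 - p ^ i := by
          unfold condProb
          simp_rw [hout]
          have : ∀ x : Fin i → Fin 2,
              (if (if (∀ a, x a = 1) then (1 : Fin 3) else 2) = 2 then binProd i p x else 0)
              = binProd i p x - (if (∀ a, x a = 1) then binProd i p x else 0) := by
            intro x; split_ifs with h <;> simp_all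
          simp_rw [this]
          rw [Finset.sum_sub_distrib, sum_binProd, sum_ite_all, binProd_const_one]
        rw [Fin.sum_univ_three, cp0, cp1, cp2, binProd_const_one]
        unfold hbin
        ring
      · rw [if_neg h0, if_neg h1, add_zero]
        have hw0 : ¬ (∀ b : Fin j, w b = 0) := fun h => h0 (funext h)
        have hw1 : ¬ (∀ b : Fin j, w b = 1) := fun h => h1 (funext h)
        have hout : ∀ x : Fin i → Fin 2, sgtOut2 x w = 2 := by
          intro x
          unfold sgtOut2
          rw [if_neg (by tauto), if_neg (by tauto)]
        have cp0 : condProb i j p w 0 = 0 := by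
          unfold condProb
          simp_rw [hout]
          refine Finset.sum_eq_zero fun x _ => ?_
          rw [if_neg (by decide)]
        have cp1 : condProb i j p w 1 = 0 := by
          unfold condProb
          simp_rw [hout]
          refine Finset.sum_eq_zero fun x _ => ?_
          rw [if_neg (by decide)]
        have cp2 : condProb i j p w 2 = 1 := by
          unfold condProb
          simp_rw [hout]
          simp [sum_binProd]
        rw [Fin.sum_univ_three, cp0, cp1, cp2]
        simp [Real.logb_one]
  unfold condEnt
  simp_rw [key]
  rw [Finset.sum_add_distrib]
  simp [Finset.sum_ite_eq']
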